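/- arXiv:1211.3186 — 2 statements merged into one kernel-verified Lean document; each statement's English description precedes it below -/
import Mathlib

section
/- Equivalence of the two scalar products (Lemma 3.1, algebraic form). Let K = ℚ(q,t) be the field of rational functions in two indeterminates q, t over ℚ, and let R be the polynomial ring over K in two countable families of indeterminates ū_1, ū_2, … and v̄_1, v̄_2, …. For a partition λ write ū_λ = ∏_i ū_{λ_i} and v̄_λ = ∏_i v̄_{λ_i} (products over the nonzero parts). Let B : R × R → K be the K-bilinear form determined on the monomial basis {ū_λ v̄_μ : λ, μ partitions} by B(ū_λ v̄_μ, ū_ν v̄_ω) = δ_{λν} δ_{μω} q^{|λ|} z_λ z_μ(q,t). Define, for each r ≥ 1, u_r = ((1−q^r)/(1−q^r t^r)) ū_r + (q^r (1−t^r)/(1−q^r t^r)) v̄_r and v_r = v̄_r − ū_r, and set u_λ = ∏_i u_{λ_i}, v_μ = ∏_i v_{μ_i}. Then for all partitions λ, μ, ν, ω one has B(u_λ v_μ, u_ν v_ω) = δ_{λν} δ_{μω} q^{|λ|} z_λ(q,qt) z_μ(qt,t). -/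
open scoped Classical

noncomputable section

namespace DoubleMacdonald

/-- A partition, encoded as a weakly decreasing function `ℕ → ℕ` (0-indexed: `f 0 = λ₁`)
with finitely many nonzero values. -/
def IsPartition (f : ℕ → ℕ) : Prop :=
  (∀ ⦃i j : ℕ⦄, i ≤ j → f j ≤ f i) ∧ ∃ N, ∀ i, N ≤ i → f i = 0

/-- The size `|λ| = Σᵢ λᵢ` of a partition. -/
def psize (f : ℕ → ℕ) : ℕ := ∑ᶠ i, f i

/-- The multiplicity `n_k(λ)`: the number of parts of `λ` equal to `k` (for `k ≥ 1`). -/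
def mult (f : ℕ → ℕ) (k : ℕ) : ℕ := Nat.card {i : ℕ | f i = k}

/-- `z_λ = ∏_{k≥1} k^{n_k(λ)} n_k(λ)!`. -/
def zstat (f : ℕ → ℕ) : ℕ :=
  ∏ᶠ k : ℕ, (k + 1) ^ mult f (k + 1) * (mult f (k + 1)).factorial

/-- The field `K = ℚ(q,t)` of rational functions in two indeterminates over `ℚ`. -/
abbrev K : Type := FractionRing (MvPolynomial (Fin 2) ℚ)

/-- The indeterminate `q` of `ℚ(q,t)`. -/
def q : K := algebraMap (MvPolynomial (Fin 2) ℚ) K (MvPolynomial.X 0)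

/-- The indeterminate `t` of `ℚ(q,t)`. -/
def t : K := algebraMap (MvPolynomial (Fin 2) ℚ) K (MvPolynomial.X 1)

/-- The polynomial ring `R = K[ū₁, ū₂, …; v̄₁, v̄₂, …]` in two countable families of
indeterminates (indexed by `ℕ ⊕ ℕ`; only the indices `r ≥ 1` are used). -/
abbrev R : Type := MvPolynomial (ℕ ⊕ ℕ) K

/-- The generator `ū_r`. -/
def ubar (r : ℕ) : R := MvPolynomial.X (Sum.inl r)

/-- The generator `v̄_r`. -/
def vbar (r : ℕ) : R := MvPolynomial.X (Sum.inr r)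

/-- `u_r = ((1−q^r)/(1−q^r t^r)) ū_r + (q^r (1−t^r)/(1−q^r t^r)) v̄_r`. -/
def u (r : ℕ) : R :=
  MvPolynomial.C ((1 - q ^ r) / (1 - q ^ r * t ^ r)) * ubar r +
    MvPolynomial.C (q ^ r * (1 - t ^ r) / (1 - q ^ r * t ^ r)) * vbar r

/-- `v_r = v̄_r − ū_r`. -/
def v (r : ℕ) : R := vbar r - ubar r

/-- For a family `w : ℕ → R` and a partition `λ`, the product `w_λ = ∏ᵢ w_{λᵢ}`
over the nonzero parts of `λ`. -/
def prodOf (w : ℕ → R) (f : ℕ → ℕ) : R := ∏ᶠ i : ℕ, if f i = 0 then 1 else w (f i)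

/-- `z_λ(a,b) = z_λ ∏ᵢ (1 − a^{λᵢ})/(1 − b^{λᵢ})`, the product over the nonzero parts. -/
def zqt (a b : K) (f : ℕ → ℕ) : K :=
  (zstat f : K) * ∏ᶠ i : ℕ, if f i = 0 then 1 else (1 - a ^ f i) / (1 - b ^ f i)

/-!
Multiplication by `ū_r` (resp. `v̄_r`) is adjoint for `B` to the derivation `r q^r ∂/∂ū_r`
(resp. `r (1 - q^r)/(1 - t^r) ∂/∂v̄_r`); these Fock-space relations alone force the monomials
`ū_λ v̄_μ` to be orthogonal with norms `q^{|λ|} z_λ z_μ(q,t)`. For these weights the substitution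
`(ū_r, v̄_r) ↦ (u_r, v_r)` is orthogonal, with `⟨u_r, u_r⟩ = r q^r (1 - q^r)/(1 - q^r t^r)` and
`⟨v_r, v_r⟩ = r (1 - q^r t^r)/(1 - t^r)`, so the annihilators adapted to `u_r, v_r` satisfy the
same relations and the same computation gives the norms `q^{|λ|} z_λ(q,qt) z_μ(qt,t)`. As `B` is
only prescribed on `K[ū_r, v̄_r : r ≥ 1]`, it is compared there with an explicit form `fockForm`
defined on all of `R`.
-/

def numParts (f : ℕ → ℕ) : ℕ := sInf {N | ∀ i, N ≤ i → f i = 0}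

def parts (f : ℕ → ℕ) : Multiset ℕ := (Multiset.range (numParts f)).map f

namespace IsPartition

variable {f : ℕ → ℕ} (hf : IsPartition f)
include hf

theorem apply_eq_zero_iff {i : ℕ} : f i = 0 ↔ numParts f ≤ i :=
  ⟨fun h => Nat.sInf_le fun _ hj => Nat.le_zero.mp (h ▸ hf.1 hj), fun h => Nat.sInf_mem hf.2 i h⟩

theorem zero_notMem_parts : 0 ∉ parts f := by
  simp [parts, hf.apply_eq_zero_iff]

theorem finprod_eq_prod_parts {M : Type*} [CommMonoid M] (g : ℕ → M) :
    (∏ᶠ i, if f i = 0 then 1 else g (f i)) = ((parts f).map g).prod := by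
  rw [finprod_eq_prod_of_mulSupport_subset _ (s := Finset.range (numParts f)) fun i hi => by
    by_contra h
    exact hi (if_pos (hf.apply_eq_zero_iff.mpr (by simpa using h)))]
  rw [Finset.prod_eq_multiset_prod, parts, Multiset.map_map]
  refine congrArg _ (Multiset.map_congr rfl fun i hi => ?_)
  simp [hf.apply_eq_zero_iff, Multiset.mem_range.mp hi]

theorem pow_psize {M : Type*} [CommMonoid M] (x : M) :
    x ^ psize f = ((parts f).map (x ^ ·)).prod := by
  rw [psize, finsum_eq_sum_of_support_subset _ (s := Finset.range (numParts f)) fun i hi => by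
    by_contra h
    exact hi (hf.apply_eq_zero_iff.mpr (by simpa using h))]
  rw [← Finset.prod_pow_eq_pow_sum, Finset.prod_eq_multiset_prod, parts, Multiset.map_map]
  rfl

theorem count_parts {r : ℕ} (hr : r ≠ 0) : (parts f).count r = mult f r := by
  have hset : {i | f i = r} = ↑((Finset.range (numParts f)).filter (f · = r)) := by
    ext i
    simp only [Set.mem_ofPred_eq, Finset.coe_filter, Finset.mem_range, iff_and_self]
    intro h
    by_contra hi
    exact hr (h ▸ hf.apply_eq_zero_iff.mpr (not_lt.mp hi))
  rw [mult, hset, Nat.card_coe_set_eq, Set.ncard_coe_finset, parts, Multiset.count_map]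
  simp [Finset.card, eq_comm]

theorem zstat_eq :
    zstat f = (parts f).prod * ∏ r ∈ (parts f).toFinset, ((parts f).count r).factorial := by
  set L := parts f
  have hL : 0 ∉ L := hf.zero_notMem_parts
  let φ : ℕ → ℕ := fun r => r ^ L.count r * (L.count r).factorial
  have hsucc : Set.InjOn Nat.succ (Nat.succ ⁻¹' ↑L.toFinset) := Nat.succ_injective.injOn
  calc zstat f = ∏ᶠ k, φ (k + 1) := by
        simp only [zstat, φ, L, hf.count_parts (Nat.succ_ne_zero _)]
    _ = ∏ k ∈ L.toFinset.preimage Nat.succ hsucc, φ (k + 1) := by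
        refine finprod_eq_prod_of_mulSupport_subset _ fun k hk => ?_
        by_contra h
        simp_all [φ, Multiset.count_eq_zero_of_notMem]
    _ = ∏ r ∈ L.toFinset, φ r := by
        refine Finset.prod_preimage _ _ hsucc φ fun r hr hr' => ?_
        obtain rfl : r = 0 := by simpa [Nat.exists_eq_add_one, Nat.pos_iff_ne_zero] using hr'
        exact absurd (Multiset.mem_toFinset.mp hr) hL
    _ = _ := by rw [Finset.prod_mul_distrib, ← Finset.prod_multiset_count]

theorem sort_parts : (parts f).sort (· ≥ ·) = (List.range (numParts f)).map f := by
  refine List.Perm.eq_of_sortedGE ?_ ?_ (Multiset.coe_eq_coe.mp ((Multiset.sort_eq _ _).trans rfl))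
  · exact (Multiset.pairwise_sort _ _).sortedGE
  · exact List.Pairwise.sortedGE
      (List.pairwise_map.mpr (List.pairwise_lt_range.imp fun h => hf.1 h.le))

theorem eq_getD_sort_parts : f = fun i => ((parts f).sort (· ≥ ·)).getD i 0 := by
  funext i
  rw [hf.sort_parts]
  by_cases hi : i < numParts f
  · simp [hi]
  · rw [List.getD_eq_default _ _ (by simpa using hi), hf.apply_eq_zero_iff]
    exact not_lt.mp hi

theorem parts_inj {g : ℕ → ℕ} (hg : IsPartition g) : parts f = parts g ↔ f = g :=
  ⟨fun h => by rw [hf.eq_getD_sort_parts, hg.eq_getD_sort_parts, h], congrArg parts⟩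

end IsPartition

theorem exists_isPartition_parts_eq {L : Multiset ℕ} (hL : 0 ∉ L) :
    ∃ f, IsPartition f ∧ parts f = L := by
  set l := L.sort (· ≥ ·)
  have hsorted : l.SortedGE := (Multiset.pairwise_sort _ _).sortedGE
  have hzero (i : ℕ) : l.getD i 0 = 0 ↔ l.length ≤ i := by
    refine ⟨fun h => not_lt.mp fun hi => hL ?_, List.getD_eq_default _ _⟩
    rw [List.getD_eq_getElem _ _ hi] at h
    exact h ▸ (Multiset.mem_sort _).mp (List.getElem_mem hi)
  have hpart : IsPartition (l.getD · 0) := by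
    refine ⟨fun i j hij => ?_, l.length, fun i hi => (hzero i).mpr hi⟩
    dsimp only
    by_cases hj : j < l.length
    · rw [List.getD_eq_getElem _ _ hj, List.getD_eq_getElem _ _ (hij.trans_lt hj)]
      exact hsorted.getElem_ge_getElem_of_le hij
    · rw [List.getD_eq_default _ _ (not_lt.mp hj)]
      exact Nat.zero_le _
  have hn : numParts (l.getD · 0) = l.length :=
    le_antisymm (hpart.apply_eq_zero_iff.mp ((hzero _).mpr le_rfl))
      ((hzero _).mp (hpart.apply_eq_zero_iff.mpr le_rfl))
  refine ⟨_, hpart, ?_⟩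
  calc parts (l.getD · 0) = ↑((List.range l.length).map (l.getD · 0)) := by rw [parts, hn]; rfl
    _ = ↑l := congrArg _ (List.ext_getElem (by simp) fun i _ h => by simp [h])
    _ = L := Multiset.sort_eq _ _

section zweight

variable {ι κ F : Type*} [DecidableEq ι] [DecidableEq κ] [CommSemiring F]

/-- For `L` the parts of `λ`, `zweight (fun r => r) L = z_λ` and
`zweight (fun r => r * (1 - a ^ r) / (1 - b ^ r)) L = z_λ(a, b)`. -/
def zweight (c : ι → F) (L : Multiset ι) : F :=
  (L.map c).prod * ∏ x ∈ L.toFinset, ((L.count x).factorial : F)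

@[simp]
theorem zweight_zero (c : ι → F) : zweight c 0 = 1 := by
  simp [zweight]

theorem zweight_cons (c : ι → F) (a : ι) (L : Multiset ι) :
    zweight c (a ::ₘ L) = (L.count a + 1) * c a * zweight c L := by
  have hsub : L.toFinset ⊆ insert a L.toFinset := Finset.subset_insert a _
  have hextend := Finset.prod_subset hsub (f := fun x => ((L.count x).factorial : F))
    fun x _ hx => by simp [Multiset.count_eq_zero_of_notMem (by simpa using hx)]
  have ha := Finset.mem_insert_self a L.toFinset
  simp only [zweight, Multiset.map_cons, Multiset.prod_cons, Multiset.toFinset_cons]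
  rw [hextend, ← Finset.mul_prod_erase _ _ ha, ← Finset.mul_prod_erase _ _ ha,
    Finset.prod_congr rfl fun x hx => by rw [Multiset.count_cons_of_ne (Finset.ne_of_mem_erase hx)],
    Multiset.count_cons_self, Nat.factorial_succ]
  push_cast
  ring

theorem zweight_map (c : κ → F) {f : ι → κ} (hf : Function.Injective f) (L : Multiset ι) :
    zweight c (L.map f) = zweight (c ∘ f) L := by
  induction L using Multiset.induction with
  | empty => simp
  | cons a L ih =>
    rw [Multiset.map_cons, zweight_cons, zweight_cons, ih, Multiset.count_map_eq_count' _ _ hf]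
    rfl

theorem zweight_map_inl_add_map_inr (c : ι ⊕ κ → F) (L : Multiset ι) (M : Multiset κ) :
    zweight c (L.map Sum.inl + M.map Sum.inr) =
      zweight (c ∘ Sum.inl) L * zweight (c ∘ Sum.inr) M := by
  induction L using Multiset.induction with
  | empty => simp [zweight_map c Sum.inr_injective]
  | cons a L ih =>
    have hcount : (L.map Sum.inl + M.map Sum.inr).count (Sum.inl a) = L.count a := by
      simp [Multiset.count_map_eq_count' _ _ Sum.inl_injective]
    rw [Multiset.map_cons, Multiset.cons_add, zweight_cons, zweight_cons, ih, hcount]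
    simp only [Function.comp_apply]
    ring

end zweight

theorem map_inl_add_map_inr_inj {ι κ : Type*} {L L' : Multiset ι} {M M' : Multiset κ} :
    L.map Sum.inl + M.map Sum.inr = L'.map Sum.inl + M'.map Sum.inr ↔ L = L' ∧ M = M' := by
  classical
  refine ⟨fun h => ⟨?_, ?_⟩, fun ⟨hL, hM⟩ => hL ▸ hM ▸ rfl⟩
  · exact Multiset.ext.mpr fun a => by
      simpa [Multiset.count_map_eq_count' _ _ Sum.inl_injective]
        using congrArg (Multiset.count (Sum.inl a)) h
  · exact Multiset.ext.mpr fun a => by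
      simpa [Multiset.count_map_eq_count' _ _ Sum.inr_injective]
        using congrArg (Multiset.count (Sum.inr a)) h

theorem IsPartition.zweight_parts {F : Type*} [CommSemiring F] {f : ℕ → ℕ} (hf : IsPartition f)
    (g : ℕ → F) : zweight (fun r => r * g r) (parts f) = zstat f * ((parts f).map g).prod := by
  rw [zweight, Multiset.prod_map_mul, hf.zstat_eq]
  push_cast [Nat.cast_multiset_prod]
  ring

theorem IsPartition.prodOf_eq {f : ℕ → ℕ} (hf : IsPartition f) (w : ℕ → R) :
    prodOf w f = ((parts f).map w).prod :=
  hf.finprod_eq_prod_parts w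

theorem IsPartition.zqt_eq_zweight {f : ℕ → ℕ} (hf : IsPartition f) (a b : K) :
    zqt a b f = zweight (fun r : ℕ => (r : K) * ((1 - a ^ r) / (1 - b ^ r))) (parts f) := by
  rw [zqt, hf.finprod_eq_prod_parts fun r => (1 - a ^ r) / (1 - b ^ r), hf.zweight_parts]

theorem IsPartition.pow_psize_mul_zqt {f : ℕ → ℕ} (hf : IsPartition f) (x a b : K) :
    x ^ psize f * zqt a b f =
      zweight (fun r : ℕ => (r : K) * (x ^ r * ((1 - a ^ r) / (1 - b ^ r)))) (parts f) := by
  rw [zqt, hf.finprod_eq_prod_parts fun r => (1 - a ^ r) / (1 - b ^ r), hf.pow_psize,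
    hf.zweight_parts, Multiset.prod_map_mul]
  ring

theorem IsPartition.pow_psize_mul_zstat {F : Type*} [CommSemiring F] {f : ℕ → ℕ}
    (hf : IsPartition f) (x : F) :
    x ^ psize f * zstat f = zweight (fun r : ℕ => (r : F) * x ^ r) (parts f) := by
  rw [hf.pow_psize, hf.zweight_parts]
  ring

section pairing

variable {F A τ : Type*} [CommSemiring F] [CommSemiring A] [Algebra F A] [DecidableEq τ]

theorem derivation_apply_prod_map {D : Derivation F A A} {y : τ → A} {j : τ} {c : F}
    (hD : ∀ k, D (y k) = if j = k then algebraMap F A c else 0) (N : Multiset τ) :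
    D (N.map y).prod = (N.count j * c) • ((N.erase j).map y).prod := by
  induction N using Multiset.induction with
  | empty => simp
  | cons k N ih =>
    rw [Multiset.map_cons, Multiset.prod_cons, D.leibniz, ih, hD]
    by_cases hjk : j = k
    · subst hjk
      have hprod : ((N.count j : F) * c) • (y j * ((N.erase j).map y).prod) =
          ((N.count j : F) * c) • (N.map y).prod := by
        by_cases hj : j ∈ N
        · rw [Multiset.prod_map_erase hj]
        · simp [Multiset.count_eq_zero_of_notMem hj]
      rw [if_pos rfl, Multiset.count_cons_self, Multiset.erase_cons_head, smul_eq_mul,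
        mul_smul_comm, hprod, smul_eq_mul, ← Algebra.commutes, ← Algebra.smul_def, ← add_smul]
      push_cast
      ring_nf
    · rw [if_neg hjk, smul_zero, add_zero, Multiset.count_cons_of_ne hjk,
        Multiset.erase_cons_tail _ (Ne.symm hjk), Multiset.map_cons, Multiset.prod_cons,
        smul_eq_mul, mul_smul_comm]

/-- Multiplication by `y j` and the derivation `D j` act as creation and annihilation operators of
a Fock space with vacuum `1`. -/
structure IsFockFamily (Γ : A →ₗ[F] A →ₗ[F] F) (y : τ → A) (D : τ → Derivation F A A)
    (c : τ → F) : Prop where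
  adjoint : ∀ j P Q, Γ (y j * P) Q = Γ P (D j Q)
  lower : ∀ j k, D j (y k) = if j = k then algebraMap F A (c j) else 0
  one_one : Γ 1 1 = 1
  one_mul : ∀ j Q, Γ 1 (y j * Q) = 0

namespace IsFockFamily

variable {Γ : A →ₗ[F] A →ₗ[F] F}

theorem pairing_prod_map {y : τ → A} {D : τ → Derivation F A A} {c : τ → F}
    (h : IsFockFamily Γ y D c) (L N : Multiset τ) :
    Γ (L.map y).prod (N.map y).prod = if L = N then zweight c L else 0 := by
  induction L using Multiset.induction generalizing N with
  | empty =>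
    induction N using Multiset.induction with
    | empty => simp [h.one_one]
    | cons j N _ => simp [h.one_mul, (Multiset.cons_ne_zero).symm]
  | cons j L ih =>
    rw [Multiset.map_cons, Multiset.prod_cons, h.adjoint, derivation_apply_prod_map (h.lower j),
      map_smul, smul_eq_mul, ih]
    by_cases hj : j ∈ N
    · obtain ⟨N, rfl⟩ := Multiset.exists_cons_of_mem hj
      rw [Multiset.erase_cons_head, Multiset.count_cons_self]
      by_cases h : L = N
      · subst h
        rw [if_pos rfl, if_pos rfl, zweight_cons]
        push_cast
        ring
      · rw [if_neg h, if_neg (mt (Multiset.cons_inj_right j).mp h), mul_zero]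
    · rw [Multiset.count_eq_zero_of_notMem hj,
        if_neg fun (h : j ::ₘ L = N) => hj (h ▸ Multiset.mem_cons_self j L)]
      simp

theorem pairing_prod_map_inl_mul_prod_map_inr {ι κ : Type*} [DecidableEq ι] [DecidableEq κ]
    {y : ι ⊕ κ → A} {D : ι ⊕ κ → Derivation F A A} {c : ι ⊕ κ → F} (h : IsFockFamily Γ y D c)
    (L L' : Multiset ι) (M M' : Multiset κ) :
    Γ ((L.map (y ∘ Sum.inl)).prod * (M.map (y ∘ Sum.inr)).prod)
        ((L'.map (y ∘ Sum.inl)).prod * (M'.map (y ∘ Sum.inr)).prod) =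
      if L = L' ∧ M = M' then zweight (c ∘ Sum.inl) L * zweight (c ∘ Sum.inr) M else 0 := by
  have hsplit (L : Multiset ι) (M : Multiset κ) :
      (L.map (y ∘ Sum.inl)).prod * (M.map (y ∘ Sum.inr)).prod =
        ((L.map Sum.inl + M.map Sum.inr).map y).prod := by
    rw [Multiset.map_add, Multiset.prod_add, Multiset.map_map, Multiset.map_map]
  rw [hsplit, hsplit, h.pairing_prod_map,
    if_congr map_inl_add_map_inr_inj (zweight_map_inl_add_map_inr c L M) rfl]

end IsFockFamily

end pairing

section fockForm

open MvPolynomial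

variable {σ F : Type*} [DecidableEq σ] [CommSemiring F] (wt : σ → F)

def fockForm : MvPolynomial σ F →ₗ[F] MvPolynomial σ F →ₗ[F] F :=
  (basisMonomials σ F).constr F fun m => zweight wt (Finsupp.toMultiset m) • lcoeff F m

theorem fockForm_monomial (m : σ →₀ ℕ) (a : F) (Q : MvPolynomial σ F) :
    fockForm wt (monomial m a) Q = a * coeff m Q * zweight wt (Finsupp.toMultiset m) := by
  have hbasis : monomial m (1 : F) = basisMonomials σ F m := by rw [coe_basisMonomials]
  rw [← mul_one a, ← smul_eq_mul, ← smul_monomial, map_smul, fockForm, hbasis,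
    Module.Basis.constr_basis]
  simp only [LinearMap.smul_apply, lcoeff_apply, smul_eq_mul]
  ring

theorem fockForm_X_mul (i : σ) (P Q : MvPolynomial σ F) :
    fockForm wt (X i * P) Q = wt i * fockForm wt P (pderiv i Q) := by
  induction P using MvPolynomial.induction_on' with
  | monomial m a =>
    rw [X, monomial_mul, one_mul, fockForm_monomial, fockForm_monomial, coeff_pderiv,
      add_comm (Finsupp.single i 1), Finsupp.toMultiset_add, Finsupp.toMultiset_single, one_smul,
      ← Multiset.cons_zero, Multiset.add_cons, add_zero,
      zweight_cons, Finsupp.count_toMultiset]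
    ring
  | add P P' hP hP' =>
    rw [mul_add, map_add, map_add, LinearMap.add_apply, LinearMap.add_apply, hP, hP', mul_add]

theorem isFockFamily_X : IsFockFamily (fockForm wt) X (fun i => wt i • pderiv i) wt where
  adjoint i P Q := by simp [fockForm_X_mul]
  lower i j := by
    simp [pderiv_X, Pi.single_apply, eq_comm, smul_eq_C_mul]
  one_one := by rw [← C_1, ← monomial_zero', fockForm_monomial]; simp
  one_mul i Q := by rw [← C_1, ← monomial_zero', fockForm_monomial]; simp [← constantCoeff_eq]

end fockForm

theorem one_sub_algebraMap_ne_zero {p : MvPolynomial (Fin 2) ℚ}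
    (hp : MvPolynomial.constantCoeff p = 0) :
    (1 : K) - algebraMap (MvPolynomial (Fin 2) ℚ) K p ≠ 0 := by
  rw [← map_one (algebraMap (MvPolynomial (Fin 2) ℚ) K), ← map_sub, Ne,
    IsFractionRing.to_map_eq_zero_iff]
  intro h
  simpa [hp] using congrArg MvPolynomial.constantCoeff h

theorem one_sub_t_pow_ne_zero {r : ℕ} (hr : r ≠ 0) : (1 : K) - t ^ r ≠ 0 := by
  simpa [t] using one_sub_algebraMap_ne_zero (p := MvPolynomial.X 1 ^ r) (by simp [hr])

theorem one_sub_q_pow_mul_t_pow_ne_zero {r : ℕ} (hr : r ≠ 0) : (1 : K) - q ^ r * t ^ r ≠ 0 := by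
  have := one_sub_algebraMap_ne_zero (p := .X 0 ^ r * .X 1 ^ r) (by simp [hr])
  rwa [map_mul, map_pow, map_pow] at this

def barWeight : ℕ ⊕ ℕ → K :=
  Sum.elim (fun r => r * q ^ r) (fun r => r * ((1 - q ^ r) / (1 - t ^ r)))

def uvWeight : ℕ ⊕ ℕ → K :=
  Sum.elim (fun r => r * (q ^ r * ((1 - q ^ r) / (1 - (q * t) ^ r))))
    (fun r => r * ((1 - (q * t) ^ r) / (1 - t ^ r)))

def uv : ℕ ⊕ ℕ → R := Sum.elim u v

theorem coeffs_v_norm (r : ℕ) :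
    barWeight (.inl r) + barWeight (.inr r) = uvWeight (.inr r) := by
  obtain rfl | hr := eq_or_ne r 0
  · simp [barWeight, uvWeight]
  have := one_sub_t_pow_ne_zero hr
  simp only [barWeight, uvWeight, Sum.elim_inl, Sum.elim_inr, mul_pow]
  field_simp
  ring

theorem coeffs_u_orthogonal_v (r : ℕ) :
    q ^ r * (1 - t ^ r) / (1 - q ^ r * t ^ r) * barWeight (.inr r) =
      (1 - q ^ r) / (1 - q ^ r * t ^ r) * barWeight (.inl r) := by
  obtain rfl | hr := eq_or_ne r 0
  · simp [barWeight]
  have := one_sub_t_pow_ne_zero hr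
  have := one_sub_q_pow_mul_t_pow_ne_zero hr
  simp only [barWeight, Sum.elim_inl, Sum.elim_inr]
  field_simp

theorem coeffs_u_norm (r : ℕ) :
    (1 - q ^ r) / (1 - q ^ r * t ^ r) * barWeight (.inl r) * ((1 - q ^ r) / (1 - q ^ r * t ^ r)) +
      q ^ r * (1 - t ^ r) / (1 - q ^ r * t ^ r) * barWeight (.inr r) *
        (q ^ r * (1 - t ^ r) / (1 - q ^ r * t ^ r)) = uvWeight (.inl r) := by
  obtain rfl | hr := eq_or_ne r 0
  · simp [barWeight, uvWeight]
  have := one_sub_t_pow_ne_zero hr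
  have := one_sub_q_pow_mul_t_pow_ne_zero hr
  simp only [barWeight, uvWeight, Sum.elim_inl, Sum.elim_inr, mul_pow]
  field_simp
  ring

open MvPolynomial in
/-- The adjoint of multiplication by `uv j`, since multiplication by `ū_r`, `v̄_r` is adjoint to
`barWeight • ∂`. -/
def uvLower : ℕ ⊕ ℕ → Derivation K R R :=
  Sum.elim
    (fun r => ((1 - q ^ r) / (1 - q ^ r * t ^ r) * barWeight (.inl r)) • pderiv (.inl r) +
      (q ^ r * (1 - t ^ r) / (1 - q ^ r * t ^ r) * barWeight (.inr r)) • pderiv (.inr r))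
    (fun r => barWeight (.inr r) • pderiv (.inr r) - barWeight (.inl r) • pderiv (.inl r))

open MvPolynomial in
theorem isFockFamily_uv : IsFockFamily (fockForm barWeight) uv uvLower uvWeight where
  adjoint j P Q := by
    cases j with
    | inl r =>
      simp [uv, u, ubar, vbar, uvLower, add_mul, C_mul', fockForm_X_mul, mul_assoc]
    | inr r =>
      simp [uv, v, ubar, vbar, uvLower, sub_mul, fockForm_X_mul]
  lower j k := by
    rcases j with r | r <;> rcases k with s | s <;> by_cases hrs : r = s <;>
      simp [uv, u, v, ubar, vbar, uvLower, pderiv_X, hrs, smul_eq_C_mul] <;>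
      simp only [← C_mul, ← C_add, ← C_neg, ← C_sub, C_inj, C_eq_zero]
    · exact coeffs_u_norm s
    · linear_combination coeffs_u_orthogonal_v s
    · linear_combination coeffs_u_orthogonal_v s
    · linear_combination coeffs_v_norm s
  one_one := (isFockFamily_X barWeight).one_one
  one_mul j Q := by
    cases j <;>
      simp [uv, u, v, ubar, vbar, add_mul, sub_mul, C_mul', (isFockFamily_X barWeight).one_mul]

theorem bilin_eq_of_mem_span {R M N P : Type*} [CommSemiring R] [AddCommMonoid M] [Module R M]
    [AddCommMonoid N] [Module R N] [AddCommMonoid P] [Module R P] {B B' : M →ₗ[R] N →ₗ[R] P}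
    {s : Set M} {t : Set N} (h : ∀ x ∈ s, ∀ y ∈ t, B x y = B' x y) {x : M} {y : N}
    (hx : x ∈ Submodule.span R s) (hy : y ∈ Submodule.span R t) : B x y = B' x y := by
  have hleft (y : N) (hy : y ∈ t) : Set.EqOn (B.flip y) (B'.flip y) (Submodule.span R s) :=
    LinearMap.eqOn_span' fun x hx => h x hx y hy
  exact LinearMap.eqOn_span' (f := B x) (g := B' x) (fun y hy => hleft y hy hx) hy

def barMonomials : Set R :=
  {x | ∃ L M : Multiset ℕ, 0 ∉ L ∧ 0 ∉ M ∧ (L.map ubar).prod * (M.map vbar).prod = x}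

theorem one_mem_barMonomials : (1 : R) ∈ barMonomials :=
  ⟨0, 0, by simp, by simp, by simp⟩

open scoped Pointwise in
theorem barMonomials_mul_subset : barMonomials * barMonomials ⊆ barMonomials := by
  rintro _ ⟨_, ⟨L, M, hL, hM, rfl⟩, _, ⟨L', M', hL', hM', rfl⟩, rfl⟩
  refine ⟨L + L', M + M', by simp [hL, hL'], by simp [hM, hM'], ?_⟩
  simp only [Multiset.map_add, Multiset.prod_add]
  ring

/-- `K[ū_r, v̄_r : r ≥ 1]`, spanned by the monomials `ū_λ v̄_μ` on which `B` is prescribed. -/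
def barSubalgebra : Subalgebra K R :=
  (Submodule.span K barMonomials).toSubalgebra (Submodule.subset_span one_mem_barMonomials)
    fun _ _ hx hy => Submodule.span_mono barMonomials_mul_subset
      (Submodule.span_mul_span K barMonomials barMonomials ▸ Submodule.mul_mem_mul hx hy)

theorem ubar_mem_barSubalgebra {r : ℕ} (hr : r ≠ 0) : ubar r ∈ barSubalgebra :=
  Submodule.subset_span ⟨{r}, 0, by simpa using hr.symm, by simp, by simp⟩

theorem vbar_mem_barSubalgebra {r : ℕ} (hr : r ≠ 0) : vbar r ∈ barSubalgebra :=
  Submodule.subset_span ⟨0, {r}, by simp, by simpa using hr.symm, by simp⟩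

theorem u_mem_barSubalgebra {r : ℕ} (hr : r ≠ 0) : u r ∈ barSubalgebra := by
  rw [u, MvPolynomial.C_mul', MvPolynomial.C_mul']
  exact add_mem (Subalgebra.smul_mem _ (ubar_mem_barSubalgebra hr) _)
    (Subalgebra.smul_mem _ (vbar_mem_barSubalgebra hr) _)

theorem v_mem_barSubalgebra {r : ℕ} (hr : r ≠ 0) : v r ∈ barSubalgebra :=
  sub_mem (vbar_mem_barSubalgebra hr) (ubar_mem_barSubalgebra hr)

theorem prod_map_mem_barSubalgebra {w : ℕ → R} (hw : ∀ r, r ≠ 0 → w r ∈ barSubalgebra)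
    {L : Multiset ℕ} (hL : 0 ∉ L) : (L.map w).prod ∈ barSubalgebra :=
  Subalgebra.multiset_prod_mem _ fun _ hx => by
    obtain ⟨r, hr, rfl⟩ := Multiset.mem_map.mp hx
    exact hw r fun h => hL (h ▸ hr)

def IsBarScalarProduct (B : R →ₗ[K] R →ₗ[K] K) : Prop :=
  ∀ lam mu nu om : ℕ → ℕ, IsPartition lam → IsPartition mu → IsPartition nu → IsPartition om →
    B (prodOf ubar lam * prodOf vbar mu) (prodOf ubar nu * prodOf vbar om) =
      if lam = nu ∧ mu = om then q ^ psize lam * (zstat lam : K) * zqt q t mu else 0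

theorem IsBarScalarProduct.eq_fockForm {B : R →ₗ[K] R →ₗ[K] K} (hB : IsBarScalarProduct B)
    {x y : R} (hx : x ∈ barSubalgebra) (hy : y ∈ barSubalgebra) :
    B x y = fockForm barWeight x y := by
  refine bilin_eq_of_mem_span ?_ hx hy
  rintro _ ⟨L, M, hL, hM, rfl⟩ _ ⟨L', M', hL', hM', rfl⟩
  obtain ⟨lam, hlam, rfl⟩ := exists_isPartition_parts_eq hL
  obtain ⟨mu, hmu, rfl⟩ := exists_isPartition_parts_eq hM
  obtain ⟨nu, hnu, rfl⟩ := exists_isPartition_parts_eq hL'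
  obtain ⟨om, hom, rfl⟩ := exists_isPartition_parts_eq hM'
  have hfock := (isFockFamily_X barWeight).pairing_prod_map_inl_mul_prod_map_inr
    (parts lam) (parts nu) (parts mu) (parts om)
  have hbar := hB lam mu nu om hlam hmu hnu hom
  rw [hlam.prodOf_eq, hmu.prodOf_eq, hnu.prodOf_eq, hom.prodOf_eq] at hbar
  rw [hbar]
  refine (hfock.trans (if_congr (and_congr (hlam.parts_inj hnu) (hmu.parts_inj hom)) ?_ rfl)).symm
  rw [hlam.pow_psize_mul_zstat, hmu.zqt_eq_zweight]
  rfl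

theorem fockForm_prod_map_u_mul_prod_map_v (L L' M M' : Multiset ℕ) :
    fockForm barWeight ((L.map u).prod * (M.map v).prod) ((L'.map u).prod * (M'.map v).prod) =
      if L = L' ∧ M = M' then zweight (uvWeight ∘ .inl) L * zweight (uvWeight ∘ .inr) M else 0 :=
  isFockFamily_uv.pairing_prod_map_inl_mul_prod_map_inr L L' M M'

/-- **Equivalence of the two scalar products** (Lemma 3.1, algebraic form).
Let `B` be a `K`-bilinear form on `R` satisfying, on the monomial basis,
`B(ū_λ v̄_μ, ū_ν v̄_ω) = δ_{λν} δ_{μω} q^{|λ|} z_λ z_μ(q,t)`.  Then for all partitions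
`λ, μ, ν, ω`:
`B(u_λ v_μ, u_ν v_ω) = δ_{λν} δ_{μω} q^{|λ|} z_λ(q,qt) z_μ(qt,t)`. -/
theorem scalar_products_equivalent
    (B : R →ₗ[K] R →ₗ[K] K)
    (hB : ∀ lam mu nu om : ℕ → ℕ, IsPartition lam → IsPartition mu →
        IsPartition nu → IsPartition om →
      B (prodOf ubar lam * prodOf vbar mu) (prodOf ubar nu * prodOf vbar om) =
        if lam = nu ∧ mu = om then q ^ psize lam * (zstat lam : K) * zqt q t mu else 0)
    (lam mu nu om : ℕ → ℕ)
    (hlam : IsPartition lam) (hmu : IsPartition mu)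
    (hnu : IsPartition nu) (hom : IsPartition om) :
    B (prodOf u lam * prodOf v mu) (prodOf u nu * prodOf v om) =
      if lam = nu ∧ mu = om then
        q ^ psize lam * zqt q (q * t) lam * zqt (q * t) t mu
      else 0 := by
  have hmem {f g : ℕ → ℕ} (hf : IsPartition f) (hg : IsPartition g) :
      ((parts f).map u).prod * ((parts g).map v).prod ∈ barSubalgebra :=
    mul_mem (prod_map_mem_barSubalgebra (fun _ => u_mem_barSubalgebra) hf.zero_notMem_parts)
      (prod_map_mem_barSubalgebra (fun _ => v_mem_barSubalgebra) hg.zero_notMem_parts)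
  rw [hlam.prodOf_eq, hmu.prodOf_eq, hnu.prodOf_eq, hom.prodOf_eq,
    IsBarScalarProduct.eq_fockForm hB (hmem hlam hmu) (hmem hnu hom),
    fockForm_prod_map_u_mul_prod_map_v]
  refine if_congr (and_congr (hlam.parts_inj hnu) (hmu.parts_inj hom)) ?_ rfl
  rw [hlam.pow_psize_mul_zqt, hmu.zqt_eq_zweight]
  rfl

end DoubleMacdonald
end
end

section
/- Conjugation in the stable sector (Lemma B.4). Let λ and μ be partitions and let m be an integer with m ≥ |λ| + |μ|. Then the conjugate of the partition (λ + δ^m) ∪ μ equals (μ' + δ^m) ∪ λ', i.e. ((λ + δ^m) ∪ μ)' = (μ' + δ^m) ∪ λ'. -/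
/-!
Conjugation exchanges `+` and `∪` and fixes `δ^m`, so with `a = λ'` and `b = μ'` the claim becomes
`(δ^m ∪ a) + b = (δ^m + b) ∪ a`. The parts of `b` sit in the first `μ₁` rows, where `δ^m` has the
parts `m - 1, …, m - μ₁`; these are at least `ℓ(λ) = a₁` because `ℓ(λ) + μ₁ ≤ |λ| + |μ| ≤ m`.
Hence those rows stay on top of the union with `a`, and adding `b` to them commutes with the union.
-/

noncomputable section

namespace DoubleMacdonald

/-- The number `ℓ(λ)` of nonzero parts of a partition. -/
def plen (f : ℕ → ℕ) : ℕ := Nat.card {i : ℕ | 1 ≤ f i}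

/-- The conjugate partition: `λ'ⱼ = #{i : λᵢ ≥ j}` (0-indexed: `conj f j = λ'_{j+1}`). -/
def conj (f : ℕ → ℕ) : ℕ → ℕ := fun j => Nat.card {i : ℕ | j + 1 ≤ f i}

/-- The staircase partition `δ^m = (m-1, m-2, …, 1, 0)`. -/
def delta (m : ℕ) : ℕ → ℕ := fun i => m - 1 - i

/-- Componentwise sum of partitions. -/
def addF (f g : ℕ → ℕ) : ℕ → ℕ := fun i => f i + g i

/-- Union `λ ∪ μ` of partitions: the weakly decreasing rearrangement of the combined
multiset of parts, defined via `(λ ∪ μ)' = λ' + μ'`. -/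
def unionF (f g : ℕ → ℕ) : ℕ → ℕ := conj (addF (conj f) (conj g))

/-- Partial sum `λ₁ + ⋯ + λ_k`. -/
def psum (f : ℕ → ℕ) (k : ℕ) : ℕ := ∑ i ∈ Finset.range k, f i

/-- The statistic `n(λ) = Σᵢ (i-1) λᵢ`. -/
def nstat (f : ℕ → ℕ) : ℕ := ∑ᶠ i, i * f i

/-- The (extended) dominance order: `f ⪰ g` iff all partial sums of `f` dominate those of `g`. -/
def Dominates (f g : ℕ → ℕ) : Prop := ∀ k, psum g k ≤ psum f k

variable {f g h : ℕ → ℕ}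

theorem IsPartition.antitone (hf : IsPartition f) : Antitone f := fun _ _ hij => hf.1 hij

theorem IsPartition.exists_le (hf : IsPartition f) (j : ℕ) : ∃ i, f i ≤ j := by
  obtain ⟨N, hN⟩ := hf.2
  exact ⟨N, by simp [hN N le_rfl]⟩

theorem lt_conj_iff (hf : IsPartition f) {t j : ℕ} : t < conj f j ↔ j < f t := by
  have hex := hf.exists_le j
  have hrows : {i | j < f i} = Set.Iio (Nat.find hex) := by
    ext i
    simp only [Set.mem_Iio, Nat.lt_find_iff, not_le]
    exact ⟨fun hi k hk => hi.trans_le (hf.antitone hk), fun hi => hi i le_rfl⟩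
  have hcard : conj f j = Nat.find hex := by
    rw [conj, ← Set.ncard_Iio_nat (Nat.find hex), ← hrows, ← Nat.card_coe_set_eq]
    rfl
  rw [hcard, ← Set.mem_Iio, ← hrows]
  rfl

theorem conj_eq_zero_iff (hf : IsPartition f) {j : ℕ} : conj f j = 0 ↔ f 0 ≤ j := by
  rw [← not_lt, ← lt_conj_iff hf, Nat.pos_iff_ne_zero, not_not]

theorem IsPartition.conj (hf : IsPartition f) : IsPartition (conj f) :=
  ⟨fun _ _ hij => le_of_forall_lt fun _ ht =>
      (lt_conj_iff hf).2 (hij.trans_lt ((lt_conj_iff hf).1 ht)),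
    f 0, fun _ hj => (conj_eq_zero_iff hf).2 hj⟩

theorem conj_conj (hf : IsPartition f) : conj (conj f) = f :=
  funext fun t => eq_of_forall_lt_iff fun j => by rw [lt_conj_iff hf.conj, lt_conj_iff hf]

theorem addF_comm (f g : ℕ → ℕ) : addF f g = addF g f :=
  funext fun _ => add_comm _ _

theorem IsPartition.addF (hf : IsPartition f) (hg : IsPartition g) : IsPartition (addF f g) := by
  obtain ⟨N, hN⟩ := hf.2
  obtain ⟨M, hM⟩ := hg.2
  refine ⟨fun i j hij => add_le_add (hf.1 hij) (hg.1 hij), max N M, fun i hi => ?_⟩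
  rw [DoubleMacdonald.addF, hN i (le_of_max_le_left hi), hM i (le_of_max_le_right hi)]

theorem isPartition_delta (m : ℕ) : IsPartition (delta m) :=
  ⟨fun i j hij => by simp only [delta]; omega, m, fun i hi => by simp only [delta]; omega⟩

theorem conj_delta (m : ℕ) : conj (delta m) = delta m :=
  funext fun j => eq_of_forall_lt_iff fun t => by
    rw [lt_conj_iff (isPartition_delta m)]
    simp only [delta]
    omega

theorem lt_unionF_iff (hf : IsPartition f) (hg : IsPartition g) {t j : ℕ} :
    j < unionF f g t ↔ t < conj f j + conj g j :=
  lt_conj_iff (hf.conj.addF hg.conj)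

theorem unionF_comm (f g : ℕ → ℕ) : unionF f g = unionF g f := by
  rw [unionF, unionF, addF_comm]

theorem conj_unionF (hf : IsPartition f) (hg : IsPartition g) :
    conj (unionF f g) = addF (conj f) (conj g) :=
  conj_conj (hf.conj.addF hg.conj)

theorem conj_addF (hf : IsPartition f) (hg : IsPartition g) :
    conj (addF f g) = unionF (conj f) (conj g) := by
  rw [unionF, conj_conj hf, conj_conj hg]

theorem unionF_apply_of_le (hf : IsPartition f) (hh : IsPartition h) {t : ℕ} (ht : h 0 ≤ f t) :
    unionF f h t = f t := by
  refine eq_of_forall_lt_iff fun j => ?_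
  rw [lt_unionF_iff hf hh]
  constructor
  · intro hj
    by_contra! hle
    have hfj : conj f j ≤ t := not_lt.1 fun hlt => hle.not_gt ((lt_conj_iff hf).1 hlt)
    rw [(conj_eq_zero_iff hh).2 (ht.trans hle)] at hj
    omega
  · exact fun hj => ((lt_conj_iff hf).2 hj).trans_le le_self_add

theorem unionF_addF_eq_addF_unionF {b : ℕ → ℕ} (hf : IsPartition f) (hb : IsPartition b)
    (hh : IsPartition h) (L : ℕ) (hbL : ∀ t, L ≤ t → b t = 0) (hfL : ∀ t < L, h 0 ≤ f t) :
    unionF (addF f b) h = addF (unionF f h) b := by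
  funext t
  show unionF (addF f b) h t = unionF f h t + b t
  rcases lt_or_ge t L with htL | htL
  · rw [unionF_apply_of_le hf hh (hfL t htL),
      unionF_apply_of_le (hf.addF hb) hh ((hfL t htL).trans le_self_add)]
    rfl
  refine eq_of_forall_lt_iff fun j => ?_
  rw [hbL t htL, add_zero, lt_unionF_iff (hf.addF hb) hh, lt_unionF_iff hf hh]
  rcases lt_or_ge j (h 0) with hj | hj
  · have hcols : conj (addF f b) j = conj f j := eq_of_forall_lt_iff fun i => by
      rw [lt_conj_iff (hf.addF hb), lt_conj_iff hf, DoubleMacdonald.addF]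
      rcases lt_or_ge i L with hi | hi
      · have := hfL i hi
        omega
      · rw [hbL i hi, add_zero]
    rw [hcols]
  · rw [(conj_eq_zero_iff hh).2 hj, add_zero, add_zero, lt_conj_iff (hf.addF hb), lt_conj_iff hf,
      DoubleMacdonald.addF, hbL t htL, add_zero]

theorem IsPartition.sum_range_le_psize (hf : IsPartition f) (n : ℕ) :
    ∑ i ∈ Finset.range n, f i ≤ psize f := by
  obtain ⟨N, hN⟩ := hf.2
  have hsupp : Function.support f ⊆ Finset.range (max n N) := fun i hi => by
    simp only [Finset.coe_range, Set.mem_Iio]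
    by_contra! hle
    exact hi (hN i (le_of_max_le_right hle))
  rw [psize, finsum_eq_sum_of_support_subset f hsupp]
  exact Finset.sum_le_sum_of_subset (Finset.range_subset_range.2 (le_max_left _ _))

theorem IsPartition.apply_zero_le_psize (hf : IsPartition f) : f 0 ≤ psize f := by
  simpa using hf.sum_range_le_psize 1

theorem conj_zero_le_psize (hf : IsPartition f) : conj f 0 ≤ psize f :=
  calc conj f 0 = ∑ _i ∈ Finset.range (conj f 0), 1 := by simp
    _ ≤ ∑ i ∈ Finset.range (conj f 0), f i :=
      Finset.sum_le_sum fun i hi => (lt_conj_iff hf).1 (Finset.mem_range.1 hi)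
    _ ≤ psize f := hf.sum_range_le_psize _

/-- **Conjugation in the stable sector** (Lemma B.4).
If `λ`, `μ` are partitions and `m ≥ |λ| + |μ|`, then
`((λ + δ^m) ∪ μ)' = (μ' + δ^m) ∪ λ'`. -/
theorem conjugation_stable (f g : ℕ → ℕ) (hf : IsPartition f) (hg : IsPartition g)
    (m : ℕ) (hm : psize f + psize g ≤ m) :
    conj (unionF (addF f (delta m)) g) = unionF (addF (conj g) (delta m)) (conj f) := by
  have hδ := isPartition_delta m
  have hlen : conj f 0 + g 0 ≤ m :=
    (add_le_add (conj_zero_le_psize hf) hg.apply_zero_le_psize).trans hm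
  have hstable : unionF (addF (delta m) (conj g)) (conj f) =
      addF (unionF (delta m) (conj f)) (conj g) :=
    unionF_addF_eq_addF_unionF hδ hg.conj hf.conj (g 0) (fun _ ht => (conj_eq_zero_iff hg).2 ht)
      fun t ht => by simp only [delta]; omega
  rw [conj_unionF (hf.addF hδ) hg, conj_addF hf hδ, conj_delta, addF_comm (conj g), hstable,
    unionF_comm]

end DoubleMacdonald
end
end
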